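/- arXiv:1605.06634 — 2 statements merged into one kernel-verified Lean document; each statement's English description precedes it below -/
import Mathlib

section
/- Let N ≥ 2 and 0 < a < b. Suppose φ : [a,b] → ℝ is piecewise C¹ with φ(a) = φ(b) = 0, φ not identically zero, and suppose u : [a,b] → ℝ is a continuous, piecewise C² function with u(a) = u(b) = 0 such that on each of finitely many subintervals [r_{i-1}, r_i] partitioning [a,b], either -u'' - ((N-1)/r) u' = |u|^{p-1} u with u nonzero on (r_{i-1}, r_i), or u ≡ 0. If φ = Σᵢ cᵢ uᵢ where uᵢ is the restriction of u to [r_{i-1}, r_i] extended by zero, then ∫_a^b r^{N-1}(|φ'|² - p|u|^{p-1}φ²) dr = (1-p) Σᵢ cᵢ² ∫_{r_{i-1}}^{r_i} r^{N-1} |u'|² dr, which is strictly negative for p > 1 when some cᵢ ≠ 0. -/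
/-!
On each nodal interval `φ = cᵢ u`, so the quadratic form splits into the pieces
`cᵢ² ∫ r^{N-1} (u'² - p |u|^{p-1} u²)`. Multiplying the ODE
`-(r^{N-1} u')' = r^{N-1} |u|^{p-1} u` by `u` and integrating by parts (the boundary terms
vanish because `u` does at the nodes) gives `∫ r^{N-1} u'² = ∫ r^{N-1} |u|^{p+1}` on each
nodal interval, so each piece equals `(1 - p) cᵢ² ∫ r^{N-1} u'²`; this energy is positive
because `u` does not vanish inside.
-/

open Set MeasureTheory

/-- The piecewise combination `φ = Σᵢ cᵢ uᵢ`, where `uᵢ` is the restriction of `u` to the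
nodal interval `(r_{i-1}, r_i)` extended by zero. -/
noncomputable def piecedComb (m : ℕ) (r : Fin (m + 1) → ℝ) (u : ℝ → ℝ)
    (c : Fin m → ℝ) : ℝ → ℝ :=
  fun x => ∑ i : Fin m, c i * Set.indicator (Set.Ioo (r i.castSucc) (r i.succ)) u x

open Filter Topology Function

section Partition

variable {α : Type*} [LinearOrder α] {m : ℕ} {r : Fin (m + 1) → α}

theorem Monotone.iUnion_Ioc_castSucc_succ (hr : Monotone r) :
    ⋃ i : Fin m, Ioc (r i.castSucc) (r i.succ) = Ioc (r 0) (r (Fin.last m)) := by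
  have hrange : Ico 0 (Fin.last m) = range Fin.castSucc := by
    ext j
    simp [Fin.range_castSucc, Fin.lt_def]
  rw [← hr.biUnion_Ico_Ioc_map_succ, hrange, biUnion_range]
  simp only [Fin.orderSucc_castSucc]

theorem Monotone.pairwise_disjoint_on_Ioc_castSucc_succ (hr : Monotone r) :
    Pairwise (Disjoint on fun i : Fin m => Ioc (r i.castSucc) (r i.succ)) := fun i j hij => by
  simpa using hr.pairwise_disjoint_on_Ioc_succ ((Fin.castSucc_injective m).ne hij)

end Partition

theorem integral_Ioo_eq_sum_integral_Ioo_castSucc_succ {E : Type*} [NormedAddCommGroup E]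
    [NormedSpace ℝ E] {m : ℕ} {r : Fin (m + 1) → ℝ} (hr : Monotone r) {f : ℝ → E}
    (hf : ∀ i : Fin m, IntegrableOn f (Ioo (r i.castSucc) (r i.succ))) :
    ∫ x in Ioo (r 0) (r (Fin.last m)), f x =
      ∑ i : Fin m, ∫ x in Ioo (r i.castSucc) (r i.succ), f x := by
  simp_rw [← integral_Ioc_eq_integral_Ioo]
  rw [← hr.iUnion_Ioc_castSucc_succ, integral_iUnion_fintype (fun _ => measurableSet_Ioc)
    hr.pairwise_disjoint_on_Ioc_castSucc_succ fun i => (hf i).congr_set_ae Ioo_ae_eq_Ioc.symm]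

theorem piecedComb_eqOn {m : ℕ} {r : Fin (m + 1) → ℝ} (hr : Monotone r) (u : ℝ → ℝ)
    (c : Fin m → ℝ) (i : Fin m) :
    EqOn (piecedComb m r u c) (fun x => c i * u x) (Ioo (r i.castSucc) (r i.succ)) := by
  intro x hx
  refine (Finset.sum_eq_single i (fun j _ hj => ?_) (by simp)).trans (by rw [indicator_of_mem hx])
  have hxj : x ∉ Ioo (r j.castSucc) (r j.succ) := fun hxj =>
    disjoint_left.1 (hr.pairwise_disjoint_on_Ioc_castSucc_succ hj) (Ioo_subset_Ioc_self hxj)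
      (Ioo_subset_Ioc_self hx)
  rw [indicator_of_notMem hxj, mul_zero]

section Integrability

variable {k : ℕ} {α β : ℝ} {u : ℝ → ℝ}

theorem ContDiffOn.integrableOn_Ioo_mul_sq_deriv (hαβ : α < β)
    (hu : ContDiffOn ℝ 1 u (Icc α β)) {w : ℝ → ℝ} (hw : ContinuousOn w (Icc α β)) :
    IntegrableOn (fun x => w x * deriv u x ^ 2) (Ioo α β) := by
  have hD := hu.continuousOn_derivWithin (uniqueDiffOn_Icc hαβ) le_rfl
  refine ((hw.mul (hD.pow 2)).integrableOn_Icc.mono_set Ioo_subset_Icc_self).congr_fun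
    (fun x hx => ?_) measurableSet_Ioo
  simp only [Pi.mul_apply, Pi.pow_apply, derivWithin_of_mem_nhds (Icc_mem_nhds hx.1 hx.2)]

theorem ContinuousOn.abs_rpow_mul {s : Set ℝ} {q : ℝ} (hu : ContinuousOn u s) (hq : 0 ≤ q) :
    ContinuousOn (fun x => |u x| ^ q * u x) s :=
  (hu.abs.rpow_const fun _ _ => Or.inr hq).mul hu

theorem ContinuousOn.integrableOn_Ioo_pow_mul_abs_rpow_mul_self {q : ℝ}
    (hu : ContinuousOn u (Icc α β)) (hq : 0 ≤ q) :
    IntegrableOn (fun x => x ^ k * (|u x| ^ q * u x * u x)) (Ioo α β) :=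
  ((continuousOn_pow k).mul ((hu.abs_rpow_mul hq).mul hu)).integrableOn_Icc.mono_set
    Ioo_subset_Icc_self

theorem integral_Ioo_pos_of_continuousOn {f : ℝ → ℝ} (hαβ : α < β)
    (hf : ContinuousOn f (Icc α β)) (hpos : ∀ x ∈ Ioo α β, 0 < f x) :
    0 < ∫ x in Ioo α β, f x := by
  rw [← integral_Ioc_eq_integral_Ioo, ← intervalIntegral.integral_of_le hαβ.le]
  exact intervalIntegral.intervalIntegral_pos_of_pos_on (hf.intervalIntegrable_of_Icc hαβ.le)
    hpos hαβ

end Integrability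

section EnergyIdentity

variable {k : ℕ} {α β : ℝ} {u h : ℝ → ℝ}

theorem integral_pow_mul_sq_deriv_eq_of_ode (hα : 0 ≤ α) (hαβ : α < β)
    (hu : ContDiffOn ℝ 1 u (Icc α β)) (hu2 : ContDiffOn ℝ 2 u (Ioo α β))
    (huα : u α = 0) (huβ : u β = 0) (hh : ContinuousOn h (Icc α β))
    (hode : ∀ x ∈ Ioo α β, -deriv (deriv u) x - (k / x) * deriv u x = h x) :
    ∫ x in Ioo α β, x ^ k * deriv u x ^ 2 = ∫ x in Ioo α β, x ^ k * (h x * u x) := by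
  -- `D` extends `u'` continuously to `[α, β]`, so `x ^ k * D x * u x` is a primitive of the
  -- integrand that is continuous on `[α, β]` and vanishes at both endpoints.
  set D := derivWithin u (Icc α β)
  have hD : ContinuousOn D (Icc α β) :=
    hu.continuousOn_derivWithin (uniqueDiffOn_Icc hαβ) le_rfl
  have hDeq : EqOn D (deriv u) (Ioo α β) := fun x hx =>
    derivWithin_of_mem_nhds (Icc_mem_nhds hx.1 hx.2)
  have hF : ∀ x ∈ Ioo α β, HasDerivAt (fun y => y ^ k * (D y * u y))
      (x ^ k * deriv u x ^ 2 - x ^ k * (h x * u x)) x := by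
    intro x hx
    have hx0 : x ≠ 0 := (hα.trans_lt hx.1).ne'
    have hu' : HasDerivAt u (deriv u x) x :=
      ((hu2.differentiableOn two_ne_zero).differentiableAt (isOpen_Ioo.mem_nhds hx)).hasDerivAt
    have hu'' : HasDerivAt (deriv u) (deriv (deriv u) x) x :=
      ((hu2.deriv_of_isOpen isOpen_Ioo le_rfl |>.differentiableOn one_ne_zero).differentiableAt
        (isOpen_Ioo.mem_nhds hx)).hasDerivAt
    have hD' : HasDerivAt D (deriv (deriv u) x) x :=
      hu''.congr_of_eventuallyEq (eventuallyEq_of_mem (isOpen_Ioo.mem_nhds hx) hDeq)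
    have hpow : (k : ℝ) * x ^ (k - 1) = k / x * x ^ k := by
      rcases k with _ | k
      · simp
      · rw [Nat.add_sub_cancel, pow_succ]
        field_simp
    refine ((hasDerivAt_pow k x).mul (hD'.mul hu')).congr_deriv ?_
    simp only [Pi.mul_apply, hDeq hx]
    linear_combination deriv u x * u x * hpow - (x ^ k * u x) * hode x hx
  have hhu : IntegrableOn (fun x => x ^ k * (h x * u x)) (Ioo α β) :=
    ((continuousOn_pow k).mul (hh.mul hu.continuousOn)).integrableOn_Icc.mono_set
      Ioo_subset_Icc_self
  have hsq := hu.integrableOn_Ioo_mul_sq_deriv hαβ (continuousOn_pow k)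
  have hFTC := intervalIntegral.integral_eq_sub_of_hasDerivAt_of_le hαβ.le
    ((continuousOn_pow k).mul (hD.mul hu.continuousOn)) hF
    ((intervalIntegrable_iff_integrableOn_Ioo_of_le hαβ.le).2 (hsq.sub hhu))
  rw [intervalIntegral.integral_of_le hαβ.le, integral_Ioc_eq_integral_Ioo,
    integral_sub hsq hhu] at hFTC
  simpa [huα, huβ, sub_eq_zero] using hFTC

theorem integral_pow_mul_sq_deriv_pos_of_ode (hα : 0 ≤ α) (hαβ : α < β)
    (hu : ContDiffOn ℝ 1 u (Icc α β)) (hu2 : ContDiffOn ℝ 2 u (Ioo α β))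
    (huα : u α = 0) (huβ : u β = 0) (hh : ContinuousOn h (Icc α β))
    (hode : ∀ x ∈ Ioo α β, -deriv (deriv u) x - (k / x) * deriv u x = h x)
    (hpos : ∀ x ∈ Ioo α β, 0 < h x * u x) :
    0 < ∫ x in Ioo α β, x ^ k * deriv u x ^ 2 := by
  rw [integral_pow_mul_sq_deriv_eq_of_ode hα hαβ hu hu2 huα huβ hh hode]
  exact integral_Ioo_pos_of_continuousOn hαβ
    ((continuousOn_pow k).mul (hh.mul hu.continuousOn))
    fun x hx => mul_pos (pow_pos (hα.trans_lt hx.1) k) (hpos x hx)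

end EnergyIdentity

/-- Integrand of the quadratic form of the Lane–Emden equation linearized at `u`;
`k = N - 1` is the exponent of the radial weight. -/
noncomputable def linearizedDensity (k : ℕ) (p : ℝ) (u φ : ℝ → ℝ) (x : ℝ) : ℝ :=
  x ^ k * (deriv φ x ^ 2 - p * |u x| ^ (p - 1) * φ x ^ 2)

section LinearizedForm

variable {k : ℕ} {p α β c : ℝ} {u φ : ℝ → ℝ}

theorem linearizedDensity_eqOn (hφ : EqOn φ (fun x => c * u x) (Ioo α β)) :
    EqOn (linearizedDensity k p u φ)
      (fun x => c ^ 2 * (x ^ k * deriv u x ^ 2 - p * (x ^ k * (|u x| ^ (p - 1) * u x * u x))))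
      (Ioo α β) := by
  intro x hx
  have hφx : φ =ᶠ[𝓝 x] fun y => c * u y := eventuallyEq_of_mem (isOpen_Ioo.mem_nhds hx) hφ
  simp only [linearizedDensity, hφx.deriv_eq, hφx.eq_of_nhds, deriv_const_mul_field]
  ring

theorem integrableOn_linearizedDensity (hαβ : α < β) (hp : 1 ≤ p)
    (hu : ContDiffOn ℝ 1 u (Icc α β)) (hφ : EqOn φ (fun x => c * u x) (Ioo α β)) :
    IntegrableOn (linearizedDensity k p u φ) (Ioo α β) := by
  refine IntegrableOn.congr_fun ?_ (linearizedDensity_eqOn hφ).symm measurableSet_Ioo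
  exact ((hu.integrableOn_Ioo_mul_sq_deriv hαβ (continuousOn_pow k)).sub
    ((hu.continuousOn.integrableOn_Ioo_pow_mul_abs_rpow_mul_self
      (sub_nonneg.2 hp)).const_mul p)).const_mul (c ^ 2)

theorem integral_linearizedDensity (hα : 0 ≤ α) (hαβ : α < β) (hp : 1 ≤ p)
    (hu : ContDiffOn ℝ 1 u (Icc α β)) (hu2 : ContDiffOn ℝ 2 u (Ioo α β))
    (huα : u α = 0) (huβ : u β = 0)
    (hode : ∀ x ∈ Ioo α β, -deriv (deriv u) x - (k / x) * deriv u x = |u x| ^ (p - 1) * u x)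
    (hφ : EqOn φ (fun x => c * u x) (Ioo α β)) :
    ∫ x in Ioo α β, linearizedDensity k p u φ x =
      (1 - p) * (c ^ 2 * ∫ x in Ioo α β, x ^ k * deriv u x ^ 2) := by
  rw [setIntegral_congr_fun measurableSet_Ioo (linearizedDensity_eqOn hφ), integral_const_mul,
    integral_sub (hu.integrableOn_Ioo_mul_sq_deriv hαβ (continuousOn_pow k))
      ((hu.continuousOn.integrableOn_Ioo_pow_mul_abs_rpow_mul_self
        (sub_nonneg.2 hp)).const_mul p),
    integral_const_mul, ← integral_pow_mul_sq_deriv_eq_of_ode hα hαβ hu hu2 huα huβ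
      (hu.continuousOn.abs_rpow_mul (sub_nonneg.2 hp)) hode]
  ring

theorem integral_pow_mul_sq_deriv_pos_of_laneEmden (hα : 0 ≤ α) (hαβ : α < β) (hp : 1 ≤ p)
    (hu : ContDiffOn ℝ 1 u (Icc α β)) (hu2 : ContDiffOn ℝ 2 u (Ioo α β))
    (huα : u α = 0) (huβ : u β = 0)
    (hode : ∀ x ∈ Ioo α β, -deriv (deriv u) x - (k / x) * deriv u x = |u x| ^ (p - 1) * u x)
    (hne : ∀ x ∈ Ioo α β, u x ≠ 0) :
    0 < ∫ x in Ioo α β, x ^ k * deriv u x ^ 2 := by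
  refine integral_pow_mul_sq_deriv_pos_of_ode hα hαβ hu hu2 huα huβ
    (hu.continuousOn.abs_rpow_mul (sub_nonneg.2 hp)) hode fun x hx => ?_
  rw [mul_assoc]
  exact mul_pos (Real.rpow_pos_of_pos (abs_pos.2 (hne x hx)) _) (mul_self_pos.2 (hne x hx))

end LinearizedForm

theorem quadratic_form_on_nodal_components_general
    (N m : ℕ) (hN : 2 ≤ N) (p a b : ℝ) (hp : 1 < p)
    (ha : 0 < a)
    (r : Fin (m + 1) → ℝ) (hr0 : r 0 = a) (hrm : r (Fin.last m) = b)
    (hmono : StrictMono r)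
    (u : ℝ → ℝ) (hu : ContDiffOn ℝ 1 u (Set.Icc a b))
    (hu2 : ∀ i : Fin m, ContDiffOn ℝ 2 u (Set.Ioo (r i.castSucc) (r i.succ)))
    (huz : ∀ i, u (r i) = 0)
    (hode : ∀ i : Fin m, ∀ x ∈ Set.Ioo (r i.castSucc) (r i.succ),
      (-(deriv (deriv u) x) - ((N - 1 : ℝ) / x) * deriv u x = |u x| ^ (p - 1) * u x)
        ∧ u x ≠ 0)
    (c : Fin m → ℝ) :
    (∫ x in Set.Ioo a b, x ^ (N - 1) *
        ((deriv (piecedComb m r u c) x) ^ 2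
          - p * |u x| ^ (p - 1) * (piecedComb m r u c x) ^ 2))
      = (1 - p) * ∑ i : Fin m, (c i) ^ 2 *
          ∫ x in Set.Ioo (r i.castSucc) (r i.succ), x ^ (N - 1) * (deriv u x) ^ 2
    ∧ ((∃ i, c i ≠ 0) →
        (∫ x in Set.Ioo a b, x ^ (N - 1) *
          ((deriv (piecedComb m r u c) x) ^ 2
            - p * |u x| ^ (p - 1) * (piecedComb m r u c x) ^ 2)) < 0) := by
  obtain ⟨k, rfl⟩ : ∃ k, N = k + 1 := ⟨N - 1, by omega⟩
  have hk : ((k + 1 : ℕ) : ℝ) - 1 = k := by push_cast; ring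
  simp only [Nat.add_sub_cancel, hk] at hode ⊢
  subst hr0 hrm
  have hα : ∀ i : Fin m, 0 ≤ r i.castSucc := fun i =>
    ha.le.trans (hmono.monotone (Fin.zero_le _))
  have hlt : ∀ i : Fin m, r i.castSucc < r i.succ := fun i => hmono Fin.castSucc_lt_succ
  have hu1 : ∀ i : Fin m, ContDiffOn ℝ 1 u (Icc (r i.castSucc) (r i.succ)) := fun i =>
    hu.mono (Icc_subset_Icc (hmono.monotone (Fin.zero_le _)) (hmono.monotone (Fin.le_last _)))
  have hφ := piecedComb_eqOn hmono.monotone u c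
  have hmain : ∫ x in Ioo (r 0) (r (Fin.last m)), linearizedDensity k p u (piecedComb m r u c) x
      = (1 - p) * ∑ i : Fin m, c i ^ 2 *
          ∫ x in Ioo (r i.castSucc) (r i.succ), x ^ k * deriv u x ^ 2 := by
    rw [integral_Ioo_eq_sum_integral_Ioo_castSucc_succ hmono.monotone
      fun i => integrableOn_linearizedDensity (hlt i) hp.le (hu1 i) (hφ i), Finset.mul_sum]
    exact Finset.sum_congr rfl fun i _ => integral_linearizedDensity (hα i) (hlt i) hp.le (hu1 i)
      (hu2 i) (huz _) (huz _) (fun x hx => (hode i x hx).1) (hφ i)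
  have henergy : ∀ i : Fin m, 0 < ∫ x in Ioo (r i.castSucc) (r i.succ), x ^ k * deriv u x ^ 2 :=
    fun i => integral_pow_mul_sq_deriv_pos_of_laneEmden (hα i) (hlt i) hp.le (hu1 i) (hu2 i)
      (huz _) (huz _) (fun x hx => (hode i x hx).1) fun x hx => (hode i x hx).2
  refine ⟨hmain, fun ⟨i, hci⟩ => hmain ▸ mul_neg_of_neg_of_pos (by linarith) ?_⟩
  exact Finset.sum_pos' (fun j _ => mul_nonneg (sq_nonneg _) (henergy j).le)
    ⟨i, Finset.mem_univ i, mul_pos (pow_two_pos_of_ne_zero hci) (henergy i)⟩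

/-- For a nodal radial solution `u` (solving the Lane-Emden ODE and
nonvanishing on each nodal interval), and `φ = Σᵢ cᵢ uᵢ` the piecewise combination of its
nodal components, the quadratic form satisfies
`∫ r^{N-1}(|φ'|² - p|u|^{p-1}φ²) = (1-p) Σᵢ cᵢ² ∫ r^{N-1}|u'|²`, which is strictly
negative when `p > 1` and some `cᵢ ≠ 0`. -/
theorem quadratic_form_on_nodal_components
    (N m : ℕ) (hN : 2 ≤ N) (hm : 1 ≤ m) (p a b : ℝ) (hp : 1 < p)
    (ha : 0 < a) (hab : a < b)
    (r : Fin (m + 1) → ℝ) (hr0 : r 0 = a) (hrm : r (Fin.last m) = b)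
    (hmono : StrictMono r)
    (u : ℝ → ℝ) (hu : ContDiffOn ℝ 1 u (Set.Icc a b))
    (hu2 : ∀ i : Fin m, ContDiffOn ℝ 2 u (Set.Ioo (r i.castSucc) (r i.succ)))
    (huz : ∀ i, u (r i) = 0)
    (hode : ∀ i : Fin m, ∀ x ∈ Set.Ioo (r i.castSucc) (r i.succ),
      (-(deriv (deriv u) x) - ((N - 1 : ℝ) / x) * deriv u x = |u x| ^ (p - 1) * u x)
        ∧ u x ≠ 0)
    (c : Fin m → ℝ) :
    (∫ x in Set.Ioo a b, x ^ (N - 1) *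
        ((deriv (piecedComb m r u c) x) ^ 2
          - p * |u x| ^ (p - 1) * (piecedComb m r u c x) ^ 2))
      = (1 - p) * ∑ i : Fin m, (c i) ^ 2 *
          ∫ x in Set.Ioo (r i.castSucc) (r i.succ), x ^ (N - 1) * (deriv u x) ^ 2
    ∧ ((∃ i, c i ≠ 0) →
        (∫ x in Set.Ioo a b, x ^ (N - 1) *
          ((deriv (piecedComb m r u c) x) ^ 2
            - p * |u x| ^ (p - 1) * (piecedComb m r u c x) ^ 2)) < 0) :=
  quadratic_form_on_nodal_components_general N m hN p a b hp ha r hr0 hrm hmono u hu hu2 huz hode c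
end

section
/- Let 0 < a < b, N ≥ 2, p > 1, and let u₁, …, u_m be nonzero functions on [a,b] with pairwise disjoint supports contained in subintervals [r_{i-1}, r_i] (a = r₀ < r₁ < ⋯ < r_m = b), each satisfying ∫ r^{N-1}|uᵢ'|² dr = ∫ r^{N-1}|uᵢ|^{p+1} dr. Then for every nonzero φ = Σ cᵢ uᵢ, the Rayleigh quotient [∫_a^b r^{N-1}(|φ'|² - p|φ|_{*}φ²)] / [∫_a^b r^{N-3}φ²] — where the potential p|v|^{p-1} restricted to supp(uᵢ) equals p uᵢ^{p-1} — satisfies the bound ≤ (1-p) a² λ₁, where λ₁ > 0 is the first Dirichlet eigenvalue of -Δ on the annulus A(a,b) restricted to radial functions. Consequently, the m-th min-max eigenvalue ν_m(p) ≤ (1-p) a² λ₁ → -∞ as p → +∞. -/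
open Set MeasureTheory Filter

/-- Membership in (a C¹ model of) the radial space `H¹₀((a,b))`. -/
def memH10 (a b : ℝ) (φ : ℝ → ℝ) : Prop :=
  ContDiffOn ℝ 1 φ (Set.Icc a b) ∧ φ a = 0 ∧ φ b = 0 ∧ ∀ x, x ∉ Set.Icc a b → φ x = 0

/-- The numerator of the Rayleigh quotient:
`Q(φ) = ∫ r^{N-1}(|φ'|² - p|v|^{p-1}φ²)`. -/
noncomputable def rayleighNum (N : ℕ) (p a b : ℝ) (v φ : ℝ → ℝ) : ℝ :=
  ∫ x in Set.Ioo a b, x ^ (N - 1) * ((deriv φ x) ^ 2 - p * |v x| ^ (p - 1) * (φ x) ^ 2)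

/-- The denominator of the Rayleigh quotient: `D(φ) = ∫ r^{N-3}φ²`. -/
noncomputable def rayleighDen (N : ℕ) (a b : ℝ) (φ : ℝ → ℝ) : ℝ :=
  ∫ x in Set.Ioo a b, (x ^ (N - 1) / x ^ 2) * (φ x) ^ 2

/-- The `l`-th min-max eigenvalue `ν_l` (see Statement 15). -/
noncomputable def nuMinMax (N : ℕ) (p a b : ℝ) (v : ℝ → ℝ) (l : ℕ) : ℝ :=
  sInf { t : ℝ | ∃ ψ : Fin l → ℝ → ℝ, (∀ i, memH10 a b (ψ i))
    ∧ LinearIndependent ℝ ψ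
    ∧ ∀ c : Fin l → ℝ, (∑ i, c i • ψ i) ≠ 0 →
        rayleighNum N p a b v (∑ i, c i • ψ i)
          / rayleighDen N a b (∑ i, c i • ψ i) ≤ t }

/-!
On each nodal interval only one `uᵢ` is nonzero, so for `φ = ∑ cᵢ uᵢ` the energy and the
potential term both split as `∑ cᵢ² (…)`, and the Nehari identities turn the numerator into
`(1 - p) ∫ r^{N-1} |φ'|²`. The Poincaré inequality and `a² r^{N-3} ≤ r^{N-1}` bound this energy
below by `a² λ₁ ∫ r^{N-3} φ²`, which gives the bound on the quotient since `1 - p < 0`. The `uᵢ`,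
having disjoint supports, are linearly independent, hence admissible in the min-max; the set of
min-max values is bounded below (otherwise `sInf` would return the junk value `0`) because the
potential is bounded, so `ν_m` inherits the bound.
-/

open Function Topology

section H10

variable {a b : ℝ}

theorem memH10.continuous {ψ : ℝ → ℝ} (hψ : memH10 a b ψ) (hab : a ≤ b) : Continuous ψ := by
  have hind : (Icc a b).indicator ψ = ψ := indicator_eq_self.2 fun x hx => by
    by_contra h; exact hx (hψ.2.2.2 x h)
  rw [← hind]
  refine continuous_indicator (fun x hx => ?_) (by rw [closure_Icc]; exact hψ.1.continuousOn)
  rw [frontier_Icc hab] at hx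
  rcases hx with rfl | rfl
  exacts [hψ.2.1, hψ.2.2.1]

theorem memH10.support_subset_Ioo {ψ : ℝ → ℝ} (hψ : memH10 a b ψ) : support ψ ⊆ Ioo a b := by
  intro x hx
  by_cases hx' : x ∈ Icc a b
  · rcases eq_endpoints_or_mem_Ioo_of_mem_Icc hx' with rfl | rfl | h
    exacts [absurd hψ.2.1 hx, absurd hψ.2.2.1 hx, h]
  · exact absurd (hψ.2.2.2 x hx') hx

theorem memH10_sum_smul {ι : Type*} [Fintype ι] {u : ι → ℝ → ℝ} (hu : ∀ i, memH10 a b (u i))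
    (c : ι → ℝ) : memH10 a b (∑ i, c i • u i) := by
  have happly : ∀ x, (∑ i, c i • u i) x = ∑ i, c i * u i x := fun x => by simp
  refine ⟨?_, ?_, ?_, fun x hx => ?_⟩
  · exact (ContDiffOn.sum fun i _ => contDiffOn_const.mul (hu i).1).congr fun x _ => happly x
  · simp [happly, (hu _).2.1]
  · simp [happly, (hu _).2.2.1]
  · simp [happly, (hu _).2.2.2 x hx]

theorem ContDiffOn.integrableOn_mul_deriv_sq {f g : ℝ → ℝ} (hab : a < b)
    (hf : ContDiffOn ℝ 1 f (Icc a b)) (hg : ContinuousOn g (Icc a b)) :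
    IntegrableOn (fun x => g x * deriv f x ^ 2) (Ioo a b) := by
  have hcont : ContinuousOn (fun x => g x * derivWithin f (Icc a b) x ^ 2) (Icc a b) :=
    hg.mul ((hf.continuousOn_derivWithin (uniqueDiffOn_Icc hab) le_rfl).pow 2)
  refine (hcont.integrableOn_Icc.mono_set Ioo_subset_Icc_self).congr_fun (fun x hx => ?_)
    measurableSet_Ioo
  simp only [derivWithin_of_mem_nhds (Icc_mem_nhds hx.1 hx.2)]

end H10

section Partition

variable {m : ℕ} {r : Fin (m + 1) → ℝ}

theorem exists_mem_Ioo_of_notMem_range {x : ℝ} (hx0 : r 0 < x) (hxm : x < r (Fin.last m))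
    (hx : x ∉ range r) : ∃ j : Fin m, x ∈ Ioo (r j.castSucc) (r j.succ) := by
  by_contra h
  have hlt : ∀ i, r i < x := Fin.induction hx0 fun j hj =>
    lt_of_le_of_ne (not_lt.1 fun hxj => h ⟨j, hj, hxj⟩) fun hjx => hx ⟨_, hjx⟩
  exact (hlt _).not_gt hxm

theorem ae_exists_mem_Ioo_castSucc_succ {a b : ℝ} (hr0 : r 0 = a) (hrm : r (Fin.last m) = b) :
    ∀ᵐ x ∂volume.restrict (Ioo a b), ∃ j : Fin m, x ∈ Ioo (r j.castSucc) (r j.succ) := by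
  have hfin : ∀ᵐ x ∂volume.restrict (Ioo a b), x ∉ range r :=
    ae_restrict_of_ae (measure_eq_zero_iff_ae_notMem.1 ((finite_range r).measure_zero _))
  filter_upwards [ae_restrict_mem measurableSet_Ioo, hfin] with x hx hxr
  exact exists_mem_Ioo_of_notMem_range (hr0 ▸ hx.1) (hrm ▸ hx.2) hxr

theorem Monotone.pairwise_disjoint_on_Ioo_castSucc_succ (hr : Monotone r) :
    Pairwise (Disjoint on fun j : Fin m => Ioo (r j.castSucc) (r j.succ)) :=
  (pairwise_disjoint_on _).2 fun _ _ hjk => disjoint_left.2 fun _ hx hx' =>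
    (hx.2.trans_le (hr (Fin.succ_le_castSucc_iff.2 hjk))).not_gt hx'.1

end Partition

theorem linearIndependent_of_pairwise_disjoint_support {ι α R : Type*} [Fintype ι] [Ring R]
    [NoZeroDivisors R] {f : ι → α → R} (hf : ∀ i, f i ≠ 0)
    (hd : Pairwise (Disjoint on fun i => support (f i))) : LinearIndependent R f := by
  classical
  rw [Fintype.linearIndependent_iff]
  intro g hg i
  obtain ⟨x, hx⟩ := Function.ne_iff.1 (hf i)
  have hsum := congr_fun hg x
  rw [Finset.sum_apply, Finset.sum_eq_single i fun j _ hji => by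
    simp [notMem_support.1 fun hj => (hd hji).ne_of_mem hj hx rfl]] at hsum
  · exact (mul_eq_zero.1 hsum).resolve_right hx
  · simp

theorem integral_eq_sum_mul_of_ae_eq {α ι : Type*} [MeasurableSpace α] [Fintype ι]
    {μ : Measure α} {f : α → ℝ} {g : ι → α → ℝ} (w : ι → ℝ) (hg : ∀ i, Integrable (g i) μ)
    (h : ∀ᵐ x ∂μ, f x = ∑ i, w i * g i x) : ∫ x, f x ∂μ = ∑ i, w i * ∫ x, g i x ∂μ := by
  rw [integral_congr_ae h, integral_finsetSum _ fun i _ => (hg i).const_mul _]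
  simp_rw [integral_const_mul]

theorem abs_rpow_mul_sq_eq {p s t : ℝ} (hp : p + 1 ≠ 0) (h : t ≠ 0 → |s| = |t|) :
    |s| ^ (p - 1) * t ^ 2 = |t| ^ (p + 1) := by
  rcases eq_or_ne t 0 with rfl | ht
  · simp [Real.zero_rpow hp]
  · rw [h ht, ← sq_abs t, ← Real.rpow_natCast, ← Real.rpow_add (abs_pos.2 ht)]
    ring_nf

theorem sq_mul_div_sq_le {a x y : ℝ} (ha : 0 ≤ a) (hax : a ≤ x) (hy : 0 ≤ y) :
    a ^ 2 * (y / x ^ 2) ≤ y :=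
  calc a ^ 2 * (y / x ^ 2) = a ^ 2 / x ^ 2 * y := by ring
    _ ≤ 1 * y := by gcongr; exact div_le_one_of_le₀ (pow_le_pow_left₀ ha hax 2) (sq_nonneg x)
    _ = y := one_mul y

theorem le_sq_mul_div_sq {b x y : ℝ} (hx : 0 < x) (hxb : x ≤ b) (hy : 0 ≤ y) :
    y ≤ b ^ 2 * (y / x ^ 2) :=
  calc y = x ^ 2 * (y / x ^ 2) := (mul_div_cancel₀ _ (by positivity)).symm
    _ ≤ b ^ 2 * (y / x ^ 2) := by gcongr

section Rayleigh

variable {N : ℕ} {p a b : ℝ}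

theorem continuousOn_pow_div_sq (ha : 0 < a) :
    ContinuousOn (fun x : ℝ => x ^ (N - 1) / x ^ 2) (Icc a b) :=
  (continuous_pow _).continuousOn.div (continuous_pow _).continuousOn
    fun _ hx => pow_ne_zero _ (ha.trans_le hx.1).ne'

theorem rayleighDen_pos {ψ : ℝ → ℝ} (ha : 0 < a) (hab : a < b) (hψ : memH10 a b ψ)
    (hψ0 : ψ ≠ 0) : 0 < rayleighDen N a b ψ := by
  have hsupp : support (fun x => x ^ (N - 1) / x ^ 2 * ψ x ^ 2) ∩ Ioo a b = support ψ := by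
    ext x
    by_cases hx : x ∈ Ioo a b
    · have : 0 < x := ha.trans hx.1
      simp [hx, this.ne']
    · simp [hx, notMem_support.1 fun h => hx (hψ.support_subset_Ioo h)]
  rw [rayleighDen, setIntegral_pos_iff_support_of_nonneg_ae, hsupp]
  · exact (hψ.continuous hab.le).isOpen_support.measure_pos _
      (support_nonempty_iff.2 hψ0)
  · filter_upwards [ae_restrict_mem measurableSet_Ioo] with x hx
    have : 0 < x := ha.trans hx.1
    positivity
  · exact ((continuousOn_pow_div_sq ha).mul (hψ.1.continuousOn.pow 2)).integrableOn_Icc.mono_set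
      Ioo_subset_Icc_self

theorem sq_mul_rayleighDen_le {ψ : ℝ → ℝ} (ha : 0 < a) (hψ : ContinuousOn ψ (Icc a b)) :
    a ^ 2 * rayleighDen N a b ψ ≤ ∫ x in Ioo a b, x ^ (N - 1) * ψ x ^ 2 := by
  rw [rayleighDen, ← integral_const_mul]
  refine setIntegral_mono_on ?_ ?_ measurableSet_Ioo fun x hx => ?_
  · exact (((continuousOn_pow_div_sq ha).mul (hψ.pow 2)).integrableOn_Icc.mono_set
      Ioo_subset_Icc_self).const_mul _
  · exact ((continuous_pow _).continuousOn.mul (hψ.pow 2)).integrableOn_Icc.mono_set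
      Ioo_subset_Icc_self
  · rw [← mul_assoc]
    gcongr
    exact sq_mul_div_sq_le ha.le hx.1.le (pow_nonneg (ha.trans hx.1).le _)

theorem rayleighDen_nonneg (ha : 0 < a) (ψ : ℝ → ℝ) : 0 ≤ rayleighDen N a b ψ :=
  setIntegral_nonneg measurableSet_Ioo fun x hx => by
    have : 0 < x := ha.trans hx.1
    positivity

theorem neg_mul_rayleighDen_le_rayleighNum {v ψ : ℝ → ℝ} {P : ℝ} (ha : 0 < a)
    (hψ : ContinuousOn ψ (Icc a b)) (hP : 0 ≤ P) (hvP : ∀ x ∈ Ioo a b, p * |v x| ^ (p - 1) ≤ P) :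
    -(P * b ^ 2) * rayleighDen N a b ψ ≤ rayleighNum N p a b v ψ := by
  by_cases hint : IntegrableOn
    (fun x => x ^ (N - 1) * (deriv ψ x ^ 2 - p * |v x| ^ (p - 1) * ψ x ^ 2)) (Ioo a b)
  · rw [rayleighDen, ← integral_const_mul]
    refine setIntegral_mono_on ?_ hint measurableSet_Ioo fun x hx => ?_
    · exact (((continuousOn_pow_div_sq ha).mul (hψ.pow 2)).integrableOn_Icc.mono_set
        Ioo_subset_Icc_self).const_mul _
    have hx0 : 0 < x := ha.trans hx.1
    have hw := le_sq_mul_div_sq hx0 hx.2.le (pow_nonneg hx0.le (N - 1))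
    have hψ' : 0 ≤ x ^ (N - 1) * deriv ψ x ^ 2 := by positivity
    nlinarith [mul_nonneg (mul_nonneg (sub_nonneg.2 (hvP x hx)) (pow_nonneg hx0.le (N - 1)))
      (sq_nonneg (ψ x)), mul_nonneg (mul_nonneg hP (sub_nonneg.2 hw)) (sq_nonneg (ψ x))]
  · rw [rayleighNum, integral_undef hint]
    exact mul_nonpos_of_nonpos_of_nonneg (neg_nonpos.2 (by positivity)) (rayleighDen_nonneg ha ψ)

theorem exists_le_rayleighNum_div_rayleighDen {v : ℝ → ℝ} (hp : 1 ≤ p) (ha : 0 < a)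
    (hv : ContinuousOn v (Icc a b)) :
    ∃ C, ∀ ψ, memH10 a b ψ → C ≤ rayleighNum N p a b v ψ / rayleighDen N a b ψ := by
  obtain ⟨M, hM⟩ := isCompact_Icc.exists_bound_of_continuousOn hv
  have hvP (x : ℝ) (hx : x ∈ Ioo a b) : p * |v x| ^ (p - 1) ≤ p * |M| ^ (p - 1) :=
    mul_le_mul_of_nonneg_left (Real.rpow_le_rpow (abs_nonneg _)
      ((hM x (Ioo_subset_Icc_self hx)).trans (le_abs_self M)) (by linarith)) (by linarith)
  have hP : 0 ≤ p * |M| ^ (p - 1) := mul_nonneg (by linarith) (by positivity)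
  refine ⟨-(p * |M| ^ (p - 1) * b ^ 2), fun ψ hψ => ?_⟩
  have hnum := neg_mul_rayleighDen_le_rayleighNum (N := N) ha hψ.1.continuousOn hP hvP
  rcases (rayleighDen_nonneg (N := N) (b := b) ha ψ).eq_or_lt with hden | hden
  · rw [← hden, div_zero, neg_nonpos]
    positivity
  · exact (le_div_iff₀ hden).2 hnum

theorem nuMinMax_le {v : ℝ → ℝ} {l : ℕ} (hl : 0 < l) {C t : ℝ}
    (hC : ∀ ψ, memH10 a b ψ → C ≤ rayleighNum N p a b v ψ / rayleighDen N a b ψ)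
    {ψ : Fin l → ℝ → ℝ} (hψ : ∀ i, memH10 a b (ψ i)) (hli : LinearIndependent ℝ ψ)
    (ht : ∀ c : Fin l → ℝ, ∑ i, c i • ψ i ≠ 0 →
      rayleighNum N p a b v (∑ i, c i • ψ i) / rayleighDen N a b (∑ i, c i • ψ i) ≤ t) :
    nuMinMax N p a b v l ≤ t := by
  refine csInf_le ⟨C, ?_⟩ ⟨ψ, hψ, hli, ht⟩
  rintro s ⟨χ, hχ, hχli, hs⟩
  have hsingle : ∑ j, (Pi.single ⟨0, hl⟩ (1 : ℝ) : Fin l → ℝ) j • χ j = χ ⟨0, hl⟩ := by simp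
  have hs₀ := hs (Pi.single ⟨0, hl⟩ 1) (hsingle ▸ hχli.ne_zero _)
  rw [hsingle] at hs₀
  exact (hC _ (hχ _)).trans hs₀

end Rayleigh

section Nodal

variable {ι : Type*} {I : ι → Set ℝ} {u : ι → ℝ → ℝ}

theorem apply_eq_zero_of_mem_of_ne (hd : Pairwise (Disjoint on I))
    (hsupp : ∀ i, support (u i) ⊆ I i) {j k : ι} {x : ℝ} (hx : x ∈ I j) (hkj : k ≠ j) :
    u k x = 0 :=
  notMem_support.1 fun hk => (hd hkj).ne_of_mem (hsupp k hk) hx rfl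

theorem eventuallyEq_zero_of_mem_of_ne (hI : ∀ i, IsOpen (I i)) (hd : Pairwise (Disjoint on I))
    (hsupp : ∀ i, support (u i) ⊆ I i) {j k : ι} {x : ℝ} (hx : x ∈ I j) (hkj : k ≠ j) :
    u k =ᶠ[𝓝 x] 0 := by
  filter_upwards [(hI j).mem_nhds hx] with y hy using apply_eq_zero_of_mem_of_ne hd hsupp hy hkj

theorem sum_smul_eventuallyEq_smul [Fintype ι] (hI : ∀ i, IsOpen (I i))
    (hd : Pairwise (Disjoint on I)) (hsupp : ∀ i, support (u i) ⊆ I i) (c : ι → ℝ) {j : ι}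
    {x : ℝ} (hx : x ∈ I j) : ∑ i, c i • u i =ᶠ[𝓝 x] c j • u j := by
  classical
  filter_upwards [(hI j).mem_nhds hx] with y hy
  simp only [Finset.sum_apply, Pi.smul_apply]
  exact Finset.sum_eq_single j
    (fun k _ hk => by rw [apply_eq_zero_of_mem_of_ne hd hsupp hy hk, smul_zero]) (by simp)

variable [Fintype ι] {N : ℕ} {p a b : ℝ}

theorem integral_pow_mul_deriv_sq_sum_smul (hab : a < b) (hI : ∀ i, IsOpen (I i))
    (hd : Pairwise (Disjoint on I)) (hsupp : ∀ i, support (u i) ⊆ I i)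
    (hcover : ∀ᵐ x ∂volume.restrict (Ioo a b), ∃ j, x ∈ I j) (hu : ∀ i, memH10 a b (u i))
    (c : ι → ℝ) :
    ∫ x in Ioo a b, x ^ (N - 1) * deriv (∑ i, c i • u i) x ^ 2
      = ∑ i, c i ^ 2 * ∫ x in Ioo a b, x ^ (N - 1) * deriv (u i) x ^ 2 := by
  classical
  refine integral_eq_sum_mul_of_ae_eq _
    (fun i => (hu i).1.integrableOn_mul_deriv_sq hab (continuous_pow _).continuousOn) ?_
  filter_upwards [hcover] with x ⟨j, hx⟩
  rw [(sum_smul_eventuallyEq_smul hI hd hsupp c hx).deriv_eq, deriv_const_smul_field,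
    Finset.sum_eq_single j]
  · simp only [smul_eq_mul]
    ring
  · intro k _ hk
    simp [(eventuallyEq_zero_of_mem_of_ne hI hd hsupp hx hk).deriv_eq]
  · simp

theorem rayleighNum_sum_smul {v : ℝ → ℝ} (hp : -1 < p) (hab : a < b) (hI : ∀ i, IsOpen (I i))
    (hd : Pairwise (Disjoint on I)) (hsupp : ∀ i, support (u i) ⊆ I i)
    (hcover : ∀ᵐ x ∂volume.restrict (Ioo a b), ∃ j, x ∈ I j) (hu : ∀ i, memH10 a b (u i))
    (hvu : ∀ i, ∀ x ∈ support (u i), |v x| = |u i x|) (c : ι → ℝ) :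
    rayleighNum N p a b v (∑ i, c i • u i)
      = ∑ i, c i ^ 2 * ((∫ x in Ioo a b, x ^ (N - 1) * deriv (u i) x ^ 2)
          - p * ∫ x in Ioo a b, x ^ (N - 1) * |u i x| ^ (p + 1)) := by
  classical
  have hG i := (hu i).1.integrableOn_mul_deriv_sq hab (continuous_pow (N - 1)).continuousOn
  have hV i : IntegrableOn (fun x => x ^ (N - 1) * |u i x| ^ (p + 1)) (Ioo a b) :=
    ((continuous_pow _).mul (((hu i).continuous hab.le).abs.rpow_const
      fun _ => Or.inr (by linarith))).integrableOn_Icc.mono_set Ioo_subset_Icc_self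
  rw [rayleighNum, integral_eq_sum_mul_of_ae_eq (μ := volume.restrict (Ioo a b)) (fun i => c i ^ 2)
    (g := fun i x => x ^ (N - 1) * deriv (u i) x ^ 2 - p * (x ^ (N - 1) * |u i x| ^ (p + 1)))
    (fun i => by exact (hG i).sub ((hV i).const_mul p))]
  · simp_rw [integral_sub (hG _) ((hV _).const_mul p), integral_const_mul]
  filter_upwards [hcover] with x ⟨j, hx⟩
  have hφ := sum_smul_eventuallyEq_smul hI hd hsupp c hx
  rw [hφ.deriv_eq, hφ.self_of_nhds, deriv_const_smul_field, Finset.sum_eq_single j]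
  · rw [← abs_rpow_mul_sq_eq (p := p) (s := v x) (by linarith) (hvu j x)]
    simp only [Pi.smul_apply, smul_eq_mul]
    ring
  · intro k _ hk
    simp [(eventuallyEq_zero_of_mem_of_ne hI hd hsupp hx hk).deriv_eq,
      apply_eq_zero_of_mem_of_ne hd hsupp hx hk, Real.zero_rpow (by linarith : p + 1 ≠ 0)]
  · simp

theorem rayleighNum_div_rayleighDen_sum_smul_le {v : ℝ → ℝ} {lam : ℝ} (hp : 1 < p) (ha : 0 < a)
    (hab : a < b) (hlam : 0 ≤ lam) (hI : ∀ i, IsOpen (I i)) (hd : Pairwise (Disjoint on I))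
    (hsupp : ∀ i, support (u i) ⊆ I i) (hcover : ∀ᵐ x ∂volume.restrict (Ioo a b), ∃ j, x ∈ I j)
    (hu : ∀ i, memH10 a b (u i)) (hvu : ∀ i, ∀ x ∈ support (u i), |v x| = |u i x|)
    (hnehari : ∀ i, ∫ x in Ioo a b, x ^ (N - 1) * deriv (u i) x ^ 2
      = ∫ x in Ioo a b, x ^ (N - 1) * |u i x| ^ (p + 1))
    {c : ι → ℝ} (hc : ∑ i, c i • u i ≠ 0)
    (hpoincare : lam * ∫ x in Ioo a b, x ^ (N - 1) * (∑ i, c i • u i) x ^ 2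
      ≤ ∫ x in Ioo a b, x ^ (N - 1) * deriv (∑ i, c i • u i) x ^ 2) :
    rayleighNum N p a b v (∑ i, c i • u i) / rayleighDen N a b (∑ i, c i • u i)
      ≤ (1 - p) * a ^ 2 * lam := by
  have hφ := memH10_sum_smul hu c
  set T := ∑ i, c i ^ 2 * ∫ x in Ioo a b, x ^ (N - 1) * deriv (u i) x ^ 2
  have hnum : rayleighNum N p a b v (∑ i, c i • u i) = (1 - p) * T := by
    rw [rayleighNum_sum_smul (by linarith) hab hI hd hsupp hcover hu hvu, Finset.mul_sum]
    refine Finset.sum_congr rfl fun i _ => ?_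
    rw [← hnehari i]
    ring
  have hden : 0 < rayleighDen N a b (∑ i, c i • u i) := rayleighDen_pos ha hab hφ hc
  have hT : a ^ 2 * lam * rayleighDen N a b (∑ i, c i • u i) ≤ T :=
    calc _ = lam * (a ^ 2 * rayleighDen N a b (∑ i, c i • u i)) := by ring
      _ ≤ lam * ∫ x in Ioo a b, x ^ (N - 1) * (∑ i, c i • u i) x ^ 2 :=
        mul_le_mul_of_nonneg_left (sq_mul_rayleighDen_le ha hφ.1.continuousOn) hlam
      _ ≤ T := hpoincare.trans_eq (integral_pow_mul_deriv_sq_sum_smul hab hI hd hsupp hcover hu c)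
  rw [div_le_iff₀ hden, hnum]
  linarith [mul_le_mul_of_nonpos_left hT (by linarith : 1 - p ≤ 0)]

end Nodal

theorem mth_eigenvalue_diverges_general
    (N m : ℕ) (hm : 1 ≤ m) (p a b lam1 : ℝ) (hp : 1 < p) (ha : 0 < a)
    (hab : a < b) (hlam : 0 < lam1)
    (hpoincare : ∀ φ : ℝ → ℝ, memH10 a b φ →
      lam1 * ∫ x in Set.Ioo a b, x ^ (N - 1) * (φ x) ^ 2
        ≤ ∫ x in Set.Ioo a b, x ^ (N - 1) * (deriv φ x) ^ 2)
    (v : ℝ → ℝ) (hv : ContinuousOn v (Set.Icc a b))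
    (r : Fin (m + 1) → ℝ) (hr0 : r 0 = a) (hrm : r (Fin.last m) = b)
    (hmono : StrictMono r)
    (u : Fin m → ℝ → ℝ) (huH : ∀ i, memH10 a b (u i)) (hu0 : ∀ i, u i ≠ 0)
    (hsupp : ∀ i : Fin m, Function.support (u i) ⊆ Set.Icc (r i.castSucc) (r i.succ))
    (hvu : ∀ i, ∀ x ∈ Function.support (u i), |v x| = |u i x|)
    (hnehari : ∀ i, (∫ x in Set.Ioo a b, x ^ (N - 1) * (deriv (u i) x) ^ 2)
      = ∫ x in Set.Ioo a b, x ^ (N - 1) * |u i x| ^ (p + 1)) :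
    (∀ c : Fin m → ℝ, (∃ i, c i ≠ 0) →
        rayleighNum N p a b v (∑ i, c i • u i)
          / rayleighDen N a b (∑ i, c i • u i) ≤ (1 - p) * a ^ 2 * lam1)
    ∧ nuMinMax N p a b v m ≤ (1 - p) * a ^ 2 * lam1
    ∧ Tendsto (fun q : ℝ => (1 - q) * a ^ 2 * lam1) atTop atBot := by
  have hsuppIoo i : support (u i) ⊆ Ioo (r i.castSucc) (r i.succ) :=
    interior_Icc (a := r i.castSucc) ▸
      interior_maximal (hsupp i) ((huH i).continuous hab.le).isOpen_support
  have hd := hmono.monotone.pairwise_disjoint_on_Ioo_castSucc_succ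
  have hcover := ae_exists_mem_Ioo_castSucc_succ hr0 hrm
  have hli : LinearIndependent ℝ u := linearIndependent_of_pairwise_disjoint_support hu0
    fun i j hij => (hd hij).mono (hsuppIoo i) (hsuppIoo j)
  have hquot (c : Fin m → ℝ) (hc : ∑ i, c i • u i ≠ 0) :=
    rayleighNum_div_rayleighDen_sum_smul_le hp ha hab hlam.le (fun _ => isOpen_Ioo) hd hsuppIoo
      hcover huH hvu hnehari hc (hpoincare _ (memH10_sum_smul huH c))
  obtain ⟨C, hC⟩ := exists_le_rayleighNum_div_rayleighDen (N := N) hp.le ha hv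
  refine ⟨fun c ⟨i, hci⟩ => hquot c fun h => hci (Fintype.linearIndependent_iff.1 hli c h i),
    nuMinMax_le hm hC huH hli hquot, ?_⟩
  exact ((tendsto_atBot_add_const_left _ 1 tendsto_neg_atTop_atBot).atBot_mul_const
    (pow_pos ha 2)).atBot_mul_const hlam

/-- Let `u₁, …, u_m` be the nodal components (supported in consecutive
subintervals, each satisfying the Nehari identity `∫ r^{N-1}|uᵢ'|² = ∫ r^{N-1}|uᵢ|^{p+1}`,
with `|v| = |uᵢ|` on `supp uᵢ`).  Then every nonzero combination `φ = Σ cᵢ uᵢ` has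
Rayleigh quotient at most `(1-p) a² λ₁`, where `λ₁ > 0` is the first radial Dirichlet
eigenvalue; consequently `ν_m(p) ≤ (1-p) a² λ₁ → -∞` as `p → +∞`. -/
theorem mth_eigenvalue_diverges
    (N m : ℕ) (hN : 2 ≤ N) (hm : 1 ≤ m) (p a b lam1 : ℝ) (hp : 1 < p) (ha : 0 < a)
    (hab : a < b) (hlam : 0 < lam1)
    (hpoincare : ∀ φ : ℝ → ℝ, memH10 a b φ →
      lam1 * ∫ x in Set.Ioo a b, x ^ (N - 1) * (φ x) ^ 2
        ≤ ∫ x in Set.Ioo a b, x ^ (N - 1) * (deriv φ x) ^ 2)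
    (v : ℝ → ℝ) (hv : ContinuousOn v (Set.Icc a b))
    (r : Fin (m + 1) → ℝ) (hr0 : r 0 = a) (hrm : r (Fin.last m) = b)
    (hmono : StrictMono r)
    (u : Fin m → ℝ → ℝ) (huH : ∀ i, memH10 a b (u i)) (hu0 : ∀ i, u i ≠ 0)
    (hsupp : ∀ i : Fin m, Function.support (u i) ⊆ Set.Icc (r i.castSucc) (r i.succ))
    (hvu : ∀ i, ∀ x ∈ Function.support (u i), |v x| = |u i x|)
    (hnehari : ∀ i, (∫ x in Set.Ioo a b, x ^ (N - 1) * (deriv (u i) x) ^ 2)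
      = ∫ x in Set.Ioo a b, x ^ (N - 1) * |u i x| ^ (p + 1)) :
    (∀ c : Fin m → ℝ, (∃ i, c i ≠ 0) →
        rayleighNum N p a b v (∑ i, c i • u i)
          / rayleighDen N a b (∑ i, c i • u i) ≤ (1 - p) * a ^ 2 * lam1)
    ∧ nuMinMax N p a b v m ≤ (1 - p) * a ^ 2 * lam1
    ∧ Tendsto (fun q : ℝ => (1 - q) * a ^ 2 * lam1) atTop atBot :=
  mth_eigenvalue_diverges_general N m hm p a b lam1 hp ha hab hlam hpoincare v hv r hr0 hrm hmono u
    huH hu0 hsupp hvu hnehari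
end
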